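/- arXiv:1611.07876 — 4 statements merged into one kernel-verified Lean document; each statement's English description precedes it below -/
import Mathlib

section
/- Let P(z) = I_d z^p + P₁z^{p-1} + ... + P_p be a d×d matrix polynomial, P_p = αβᵀ with α, β ∈ ℝ^{d×r} of full rank r, and define P*(z) = (P(z) - P_p)/z (a matrix polynomial since P(0) = P_p). Define the d×d matrix polynomial P̃(z) with blocks P̃₁₁(z) = αᵀα(βᵀβ) + αᵀP*(z)βz, P̃₁₂(z) = αᵀP*(z)β⊥, P̃₂₁(z) = α⊥ᵀP*(z)βz, P̃₂₂(z) = α⊥ᵀP*(z)β⊥. Then for all z ≠ 0, det(P̃(z)) = z^{-(d-r)} · det((α, α⊥)ᵀ) · det(P(z)) · det((β, β⊥)). -/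
/-!
Write `P z = z • P⋆ z + α βᵀ`. Multiplying on the left by `(α, α⊥)ᵀ` and on the right by
`(β, β⊥)` kills every block of `α βᵀ` except the top-left one, by the orthogonality relations,
and every block of `z • P⋆ z` in the right column is `z` times the corresponding block of `P̃ z`.
Hence `(α, α⊥)ᵀ P(z) (β, β⊥) = P̃(z) · diag(1, z • 1)`; now take determinants.
-/

open Matrix Finset

namespace Matrix

variable {R : Type*} [CommRing R] {n m k : Type*} [Fintype n] [Fintype m] [Fintype k]
  [DecidableEq m] [DecidableEq k]

theorem transpose_fromCols_mul_smul_add_mul_fromCols (z : R) (S : Matrix n n R)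
    (α β : Matrix n m R) (αp βp : Matrix n k R) (hoα : αᵀ * αp = 0) (hoβ : βᵀ * βp = 0) :
    (fromCols α αp)ᵀ * (z • S + α * βᵀ) * fromCols β βp =
      fromBlocks (αᵀ * α * (βᵀ * β) + z • (αᵀ * S * β)) (αᵀ * S * βp)
          (z • (αpᵀ * S * β)) (αpᵀ * S * βp) *
        fromBlocks 1 0 0 (z • 1) := by
  have hoα' : αpᵀ * α = 0 := by
    rw [← transpose_transpose (αpᵀ * α), transpose_mul, transpose_transpose, hoα, transpose_zero]
  rw [transpose_fromCols, fromRows_mul, fromRows_mul_fromCols, fromBlocks_multiply]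
  simp only [Matrix.mul_add, Matrix.add_mul, Matrix.mul_smul, Matrix.smul_mul, ← Matrix.mul_assoc,
    hoα']
  simp only [Matrix.mul_assoc, hoβ, Matrix.mul_zero, Matrix.zero_mul, Matrix.mul_one, smul_zero,
    add_zero, zero_add, fromBlocks_inj, and_true]
  exact add_comm _ _

theorem det_mul_fromBlocks_one_zero_zero_smul_one (X : Matrix (m ⊕ k) (m ⊕ k) R) (z : R) :
    (X * fromBlocks 1 0 0 (z • 1 : Matrix k k R)).det = X.det * z ^ Fintype.card k := by
  rw [det_mul, det_fromBlocks_zero₂₁, det_smul, det_one, det_one, one_mul, mul_one]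

theorem det_transpose_reindex_mul_det_mul_det_reindex [DecidableEq n] {ι : Type*} [Fintype ι]
    [DecidableEq ι] (e : ι ≃ n) (A B : Matrix n ι R) (M : Matrix n n R) :
    (reindex (Equiv.refl n) e A)ᵀ.det * M.det * (reindex (Equiv.refl n) e B).det =
      (Aᵀ * M * B).det := by
  rw [← det_mul, ← det_mul, ← det_submatrix_equiv_self e.symm]
  congr 1

end Matrix

theorem stmt_6_general {d r p : ℕ} (hrd : r < d)
    (Pc : ℕ → Matrix (Fin d) (Fin d) ℝ)
    (α β : Matrix (Fin d) (Fin r) ℝ)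
    (αp βp : Matrix (Fin d) (Fin (d - r)) ℝ)
    (hoα : αᵀ * αp = 0) (hoβ : βᵀ * βp = 0)
    (hPp : Pc p = α * βᵀ)
    (P Pstar : ℝ → Matrix (Fin d) (Fin d) ℝ)
    (hPstar : ∀ z : ℝ, z • Pstar z = P z - Pc p) :
    ∀ z : ℝ, z ≠ 0 →
      (Matrix.fromBlocks
          (αᵀ * α * (βᵀ * β) + z • (αᵀ * Pstar z * β)) (αᵀ * Pstar z * βp)
          (z • (αpᵀ * Pstar z * β)) (αpᵀ * Pstar z * βp)).det
        = (z ^ (d - r))⁻¹ *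
          ((Matrix.reindex (Equiv.refl (Fin d))
              (finSumFinEquiv.trans (finCongr (Nat.add_sub_cancel' hrd.le)))
              (Matrix.fromCols α αp))ᵀ).det *
          (P z).det *
          (Matrix.reindex (Equiv.refl (Fin d))
              (finSumFinEquiv.trans (finCongr (Nat.add_sub_cancel' hrd.le)))
              (Matrix.fromCols β βp)).det := by
  intro z hz
  have hPz : P z = z • Pstar z + α * βᵀ := by rw [hPstar z, hPp, sub_add_cancel]
  rw [mul_assoc (z ^ (d - r))⁻¹, mul_assoc (z ^ (d - r))⁻¹,
    det_transpose_reindex_mul_det_mul_det_reindex, hPz,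
    transpose_fromCols_mul_smul_add_mul_fromCols _ _ _ _ _ _ hoα hoβ,
    det_mul_fromBlocks_one_zero_zero_smul_one, Fintype.card_fin, mul_comm,
    mul_inv_cancel_right₀ (pow_ne_zero _ hz)]

theorem stmt_6 {d r p : ℕ} (hr : 0 < r) (hrd : r < d) (hp : 0 < p)
    (Pc : ℕ → Matrix (Fin d) (Fin d) ℝ)
    (α β : Matrix (Fin d) (Fin r) ℝ)
    (αp βp : Matrix (Fin d) (Fin (d - r)) ℝ)
    (hα : α.rank = r) (hβ : β.rank = r)
    (hαp : αp.rank = d - r) (hβp : βp.rank = d - r)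
    (hoα : αᵀ * αp = 0) (hoβ : βᵀ * βp = 0)
    (hPp : Pc p = α * βᵀ)
    (P Pstar : ℝ → Matrix (Fin d) (Fin d) ℝ)
    (hP : ∀ z : ℝ, P z = z ^ p • (1 : Matrix (Fin d) (Fin d) ℝ) +
        ∑ i ∈ Finset.range p, z ^ (p - 1 - i) • Pc (i + 1))
    (hPstar : ∀ z : ℝ, z • Pstar z = P z - Pc p) :
    ∀ z : ℝ, z ≠ 0 →
      (Matrix.fromBlocks
          (αᵀ * α * (βᵀ * β) + z • (αᵀ * Pstar z * β)) (αᵀ * Pstar z * βp)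
          (z • (αpᵀ * Pstar z * β)) (αpᵀ * Pstar z * βp)).det
        = (z ^ (d - r))⁻¹ *
          ((Matrix.reindex (Equiv.refl (Fin d))
              (finSumFinEquiv.trans (finCongr (Nat.add_sub_cancel' hrd.le)))
              (Matrix.fromCols α αp))ᵀ).det *
          (P z).det *
          (Matrix.reindex (Equiv.refl (Fin d))
              (finSumFinEquiv.trans (finCongr (Nat.add_sub_cancel' hrd.le)))
              (Matrix.fromCols β βp)).det :=
  stmt_6_general hrd Pc α β αp βp hoα hoβ hPp P Pstar hPstar
end

section
/- With the notation of the previous statement, det(P̃(0)) = det(αᵀα) · det(βᵀβ) · det(α⊥ᵀP*(0)β⊥), and this is nonzero when α⊥ᵀP_{p-1}β⊥ is invertible (noting P*(0) = P_{p-1}). -/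
open Matrix

lemma isUnit_of_rank_eq_card {n : ℕ} (A : Matrix (Fin n) (Fin n) ℝ)
    (h : A.rank = n) : IsUnit A := by
  rw [← Matrix.mulVec_surjective_iff_isUnit]
  have : LinearMap.range A.mulVecLin = ⊤ := by
    apply Submodule.eq_top_of_finrank_eq
    simpa [Matrix.rank] using h
  intro y
  exact (LinearMap.range_eq_top.mp this) y

theorem stmt_7 {d r : ℕ} (hr : 0 < r) (hrd : r < d)
    (α β : Matrix (Fin d) (Fin r) ℝ) (αp βp : Matrix (Fin d) (Fin (d - r)) ℝ)
    (hα : α.rank = r) (hβ : β.rank = r)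
    (hαp : αp.rank = d - r) (hβp : βp.rank = d - r)
    (hoα : αᵀ * αp = 0) (hoβ : βᵀ * βp = 0)
    (Pm1 : Matrix (Fin d) (Fin d) ℝ) (Pstar : ℝ → Matrix (Fin d) (Fin d) ℝ)
    (hPstar0 : Pstar 0 = Pm1)
    (hinv : IsUnit (αpᵀ * Pm1 * βp)) :
    (Matrix.fromBlocks
        (αᵀ * α * (βᵀ * β)) (αᵀ * Pstar 0 * βp)
        (0 : Matrix (Fin (d - r)) (Fin r) ℝ) (αpᵀ * Pstar 0 * βp)).det
      = (αᵀ * α).det * (βᵀ * β).det * (αpᵀ * Pstar 0 * βp).det ∧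
    (Matrix.fromBlocks
        (αᵀ * α * (βᵀ * β)) (αᵀ * Pstar 0 * βp)
        (0 : Matrix (Fin (d - r)) (Fin r) ℝ) (αpᵀ * Pstar 0 * βp)).det ≠ 0 := by
  have hdet : (Matrix.fromBlocks
        (αᵀ * α * (βᵀ * β)) (αᵀ * Pstar 0 * βp)
        (0 : Matrix (Fin (d - r)) (Fin r) ℝ) (αpᵀ * Pstar 0 * βp)).det
      = (αᵀ * α).det * (βᵀ * β).det * (αpᵀ * Pstar 0 * βp).det := by
    rw [Matrix.det_fromBlocks_zero₂₁, Matrix.det_mul]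
  refine ⟨hdet, ?_⟩
  rw [hdet]
  have hα' : IsUnit (αᵀ * α) :=
    isUnit_of_rank_eq_card _ (by rw [Matrix.rank_transpose_mul_self, hα])
  have hβ' : IsUnit (βᵀ * β) :=
    isUnit_of_rank_eq_card _ (by rw [Matrix.rank_transpose_mul_self, hβ])
  have h3 : IsUnit (αpᵀ * Pstar 0 * βp) := by rwa [hPstar0]
  simp only [mul_ne_zero_iff]
  exact ⟨⟨(Matrix.isUnit_iff_isUnit_det _).mp hα' |>.ne_zero,
    (Matrix.isUnit_iff_isUnit_det _).mp hβ' |>.ne_zero⟩,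
    (Matrix.isUnit_iff_isUnit_det _).mp h3 |>.ne_zero⟩
end

section
/- Let C = (C₁, C₂) ∈ ℝ^{d×N} with C₁ ∈ ℝ^{d×c}, C₂ ∈ ℝ^{d×(N-c)}; K = (K₁; K₂) ∈ ℝ^{N×d} with K₁ ∈ ℝ^{c×d}, K₂ ∈ ℝ^{(N-c)×d}; and E₂ ∈ ℝ^{(N-c)×(N-c)}. Suppose the block matrix G = [K₁C₁, K₁C₂; K₂C₁, K₂C₂ + I - E₂] is invertible and S := I_{N-c} - E₂ + K₂C₂ is invertible. Then k(1) := I_d - C G^{-1} K satisfies k(1)·C₁ = 0_{d×c}. -/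
/-!
The first block column of `G` is `K C₁`, i.e. `K C₁ = G [I; 0]`. Hence `G⁻¹ K C₁ = [I; 0]` and
`C G⁻¹ K C₁ = C [I; 0] = C₁`, so `(I - C G⁻¹ K) C₁ = 0`.
-/

open Matrix

namespace Matrix

section

variable {m n p R : Type*} [Fintype m] [Fintype n] [DecidableEq m] [DecidableEq n] [CommRing R]

theorem one_sub_mul_inv_mul_mul_eq_zero_of_mul_eq (C : Matrix m n R) (G : Matrix n n R)
    (K : Matrix n m R) (Y : Matrix n p R) (hG : IsUnit G) (hKCY : K * (C * Y) = G * Y) :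
    (1 - C * G⁻¹ * K) * (C * Y) = 0 := by
  have := hG.invertible
  rw [Matrix.sub_mul, Matrix.one_mul, Matrix.mul_assoc, Matrix.mul_assoc, hKCY,
    inv_mul_cancel_left_of_invertible, sub_self]

end

section

variable {m m₁ m₂ n₁ n₂ R : Type*} [Fintype n₁] [Fintype n₂] [DecidableEq n₁] [Semiring R]

-- Without the ascription on `fromRows 1 0`, `*` elaborates to the `CStarMatrix` instance.
theorem fromBlocks_mul_fromRows_one_zero (A : Matrix m₁ n₁ R) (B : Matrix m₁ n₂ R)
    (C : Matrix m₂ n₁ R) (D : Matrix m₂ n₂ R) :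
    fromBlocks A B C D * (fromRows 1 0 : Matrix (n₁ ⊕ n₂) n₁ R) = fromRows A C := by
  simp only [fromBlocks_mul_fromRows, Matrix.mul_one, Matrix.mul_zero, add_zero]

theorem fromCols_mul_fromRows_one_zero (A : Matrix m n₁ R) (B : Matrix m n₂ R) :
    fromCols A B * (fromRows 1 0 : Matrix (n₁ ⊕ n₂) n₁ R) = A := by
  simp only [fromCols_mul_fromRows, Matrix.mul_one, Matrix.mul_zero, add_zero]

end

end Matrix

theorem stmt_13_general {N c d : ℕ}
    (C₁ : Matrix (Fin d) (Fin c) ℝ) (C₂ : Matrix (Fin d) (Fin (N - c)) ℝ)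
    (K₁ : Matrix (Fin c) (Fin d) ℝ) (K₂ : Matrix (Fin (N - c)) (Fin d) ℝ)
    (E₂ : Matrix (Fin (N - c)) (Fin (N - c)) ℝ)
    (hG : IsUnit (Matrix.fromBlocks (K₁ * C₁) (K₁ * C₂) (K₂ * C₁) (K₂ * C₂ + 1 - E₂))) :
    ((1 : Matrix (Fin d) (Fin d) ℝ) -
        Matrix.fromCols C₁ C₂ *
          (Matrix.fromBlocks (K₁ * C₁) (K₁ * C₂) (K₂ * C₁) (K₂ * C₂ + 1 - E₂))⁻¹ *
          Matrix.fromRows K₁ K₂) * C₁ = 0 := by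
  have hC : fromCols C₁ C₂ * (fromRows 1 0 : Matrix (Fin c ⊕ Fin (N - c)) (Fin c) ℝ) = C₁ :=
    fromCols_mul_fromRows_one_zero C₁ C₂
  have hKC₁ : fromRows K₁ K₂ * C₁ =
      fromBlocks (K₁ * C₁) (K₁ * C₂) (K₂ * C₁) (K₂ * C₂ + 1 - E₂) *
        (fromRows 1 0 : Matrix (Fin c ⊕ Fin (N - c)) (Fin c) ℝ) := by
    rw [fromRows_mul, fromBlocks_mul_fromRows_one_zero]
  have h := one_sub_mul_inv_mul_mul_eq_zero_of_mul_eq (fromCols C₁ C₂) _ (fromRows K₁ K₂) _ hG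
    (by rwa [hC])
  rwa [hC] at h

theorem stmt_13 {N c d : ℕ}
    (C₁ : Matrix (Fin d) (Fin c) ℝ) (C₂ : Matrix (Fin d) (Fin (N - c)) ℝ)
    (K₁ : Matrix (Fin c) (Fin d) ℝ) (K₂ : Matrix (Fin (N - c)) (Fin d) ℝ)
    (E₂ : Matrix (Fin (N - c)) (Fin (N - c)) ℝ)
    (hG : IsUnit (Matrix.fromBlocks (K₁ * C₁) (K₁ * C₂) (K₂ * C₁) (K₂ * C₂ + 1 - E₂)))
    (hS : IsUnit ((1 : Matrix (Fin (N - c)) (Fin (N - c)) ℝ) - E₂ + K₂ * C₂))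
    (hK₁C₁ : IsUnit (K₁ * C₁)) :
    ((1 : Matrix (Fin d) (Fin d) ℝ) -
        Matrix.fromCols C₁ C₂ *
          (Matrix.fromBlocks (K₁ * C₁) (K₁ * C₂) (K₂ * C₁) (K₂ * C₂ + 1 - E₂))⁻¹ *
          Matrix.fromRows K₁ K₂) * C₁ = 0 :=
  stmt_13_general C₁ C₂ K₁ K₂ E₂ hG
end

section
/- Under the setting of the previous statement, with P := I_d - C₁(K₁C₁)^{-1}K₁, Q := I_{N-c} - E₂ + K₂C₂ - K₂C₁(K₁C₁)^{-1}K₁C₂ invertible, one has k(1) = P - PC₂Q^{-1}K₂P, and consequently rank k(1) = d - c provided I_d + PC₂(I_{N-c}-E₂)^{-1}K₂P is invertible and I_{N-c} - E₂ is invertible. -/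
/-!
Inverting the block matrix through the Schur complement `Q` of `K₁ C₁` collapses `k(1)` to
`P - P C₂ Q⁻¹ K₂ P`, where `P = 1 - C₁ (K₁ C₁)⁻¹ K₁` is the projection onto `ker K₁` along
`range C₁`, of rank `d - c`. Since `Q - (1 - E₂) = K₂ P C₂` and `P² = P`, multiplying `k(1)` on the
left by `1 + P C₂ (1 - E₂)⁻¹ K₂ P` gives back `P`; when that factor is invertible, `k(1)` therefore
has the rank of `P`.
-/

open Matrix

namespace Matrix

variable {R : Type*} [Field R] {l m n : Type*} [Fintype l] [Fintype m] [Fintype n]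
  [DecidableEq m] [DecidableEq n]

theorem rank_add_rank_one_sub_of_isIdempotentElem [DecidableEq l] {P : Matrix l l R}
    (hP : IsIdempotentElem P) :
    P.rank + (1 - P).rank = Fintype.card l := by
  have hP' : IsIdempotentElem (toLin' P) := by
    rw [IsIdempotentElem, Module.End.mul_eq_comp, ← toLin'_mul, hP.eq]
  have hrange : LinearMap.range (toLin' P) = LinearMap.ker (toLin' (1 - P)) := by
    rw [map_sub, toLin'_one]
    exact LinearMap.IsIdempotentElem.range_eq_ker hP'
  have hnullity := (toLin' (1 - P)).finrank_range_add_finrank_ker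
  rw [← hrange, Module.finrank_fintype_fun_eq_card] at hnullity
  rw [rank, rank, ← hnullity, add_comm]
  rfl

theorem inv_fromBlocks_of_isUnit₁₁ {A : Matrix m m R} {B : Matrix m n R} {C : Matrix n m R}
    {D : Matrix n n R} (hA : IsUnit A) (hS : IsUnit (D - C * A⁻¹ * B)) :
    (fromBlocks A B C D)⁻¹ =
      fromBlocks (A⁻¹ + A⁻¹ * B * (D - C * A⁻¹ * B)⁻¹ * C * A⁻¹)
        (-(A⁻¹ * B * (D - C * A⁻¹ * B)⁻¹)) (-((D - C * A⁻¹ * B)⁻¹ * C * A⁻¹))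
        (D - C * A⁻¹ * B)⁻¹ := by
  let := hA.invertible
  let : Invertible (D - C * ⅟A * B) := by rw [invOf_eq_nonsing_inv]; exact hS.invertible
  let := fromBlocks₁₁Invertible A B C D
  rw [← invOf_eq_nonsing_inv, invOf_fromBlocks₁₁_eq]
  simp only [invOf_eq_nonsing_inv]

section ObliqueProjection

variable {C : Matrix l m R} {B : Matrix m l R}

theorem isIdempotentElem_mul_inv_mul (h : IsUnit (B * C)) :
    IsIdempotentElem (C * (B * C)⁻¹ * B) := by
  have hinv : (B * C)⁻¹ * (B * C) = 1 := nonsing_inv_mul _ ((isUnit_iff_isUnit_det _).mp h)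
  calc C * (B * C)⁻¹ * B * (C * (B * C)⁻¹ * B)
      = C * ((B * C)⁻¹ * (B * C)) * (B * C)⁻¹ * B := by simp only [Matrix.mul_assoc]
    _ = C * (B * C)⁻¹ * B := by rw [hinv, Matrix.mul_one]

theorem rank_mul_inv_mul (h : IsUnit (B * C)) :
    (C * (B * C)⁻¹ * B).rank = Fintype.card m := by
  set E := C * (B * C)⁻¹ * B
  have hBEC : B * E * C = B * C := by
    rw [← Matrix.mul_assoc, ← Matrix.mul_assoc,
      mul_nonsing_inv _ ((isUnit_iff_isUnit_det _).mp h), Matrix.one_mul]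
  refine le_antisymm ?_ ?_
  · exact (rank_mul_le_left _ _).trans ((rank_mul_le_left _ _).trans (rank_le_card_width C))
  · calc Fintype.card m = (B * C).rank := (rank_of_isUnit _ h).symm
      _ = (B * E * C).rank := by rw [hBEC]
      _ ≤ E.rank := (rank_mul_le_left _ _).trans (rank_mul_le_right _ _)

theorem rank_one_sub_mul_inv_mul [DecidableEq l] (h : IsUnit (B * C)) :
    (1 - C * (B * C)⁻¹ * B).rank = Fintype.card l - Fintype.card m := by
  have hsum := rank_add_rank_one_sub_of_isIdempotentElem (isIdempotentElem_mul_inv_mul h)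
  rw [rank_mul_inv_mul h] at hsum
  omega

end ObliqueProjection

theorem one_add_mul_mul_sub_mul_inv_mul_eq_self [DecidableEq l] {P : Matrix l l R}
    (hP : IsIdempotentElem P) (X : Matrix l n R) (Y : Matrix n l R) {S Q : Matrix n n R}
    (hS : IsUnit S) (hQ : IsUnit Q) (hQS : Q - S = Y * P * X) :
    (1 + P * X * S⁻¹ * Y * P) * (P - P * X * Q⁻¹ * Y * P) = P := by
  have hSS : S⁻¹ * S = 1 := nonsing_inv_mul _ ((isUnit_iff_isUnit_det _).mp hS)
  have hQQ : Q * Q⁻¹ = 1 := mul_nonsing_inv _ ((isUnit_iff_isUnit_det _).mp hQ)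
  have hmid : S⁻¹ * (Y * P * X) * Q⁻¹ = S⁻¹ - Q⁻¹ := by
    rw [← hQS, Matrix.mul_sub, Matrix.sub_mul, hSS, Matrix.mul_assoc, hQQ,
      Matrix.mul_one, Matrix.one_mul]
  calc (1 + P * X * S⁻¹ * Y * P) * (P - P * X * Q⁻¹ * Y * P)
      = P - P * X * Q⁻¹ * Y * P + P * X * S⁻¹ * Y * (P * P)
          - P * X * (S⁻¹ * (Y * (P * P) * X) * Q⁻¹) * Y * P := by
        simp only [Matrix.add_mul, Matrix.mul_sub, Matrix.one_mul, Matrix.mul_assoc]; abel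
    _ = P - P * X * Q⁻¹ * Y * P + P * X * S⁻¹ * Y * P - P * X * (S⁻¹ - Q⁻¹) * Y * P := by
        rw [hP.eq, hmid]
    _ = P := by simp only [Matrix.mul_sub, Matrix.sub_mul]; abel

theorem rank_sub_mul_inv_mul_of_isIdempotentElem [DecidableEq l] {P : Matrix l l R}
    (hP : IsIdempotentElem P) (X : Matrix l n R) (Y : Matrix n l R) {S Q : Matrix n n R}
    (hS : IsUnit S) (hQ : IsUnit Q) (hQS : Q - S = Y * P * X)
    (hR : IsUnit (1 + P * X * S⁻¹ * Y * P)) :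
    (P - P * X * Q⁻¹ * Y * P).rank = P.rank := by
  conv_rhs => rw [← one_add_mul_mul_sub_mul_inv_mul_eq_self hP X Y hS hQ hQS]
  exact (rank_mul_eq_right_of_isUnit_det _ _ ((isUnit_iff_isUnit_det _).mp hR)).symm

theorem one_sub_fromCols_mul_inv_fromBlocks_mul_fromRows [DecidableEq l]
    (C₁ : Matrix l m R) (C₂ : Matrix l n R) (K₁ : Matrix m l R) (K₂ : Matrix n l R)
    (S : Matrix n n R) (h₁ : IsUnit (K₁ * C₁))
    (hQ : IsUnit (S + K₂ * C₂ - K₂ * C₁ * (K₁ * C₁)⁻¹ * (K₁ * C₂))) :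
    1 - fromCols C₁ C₂ * (fromBlocks (K₁ * C₁) (K₁ * C₂) (K₂ * C₁) (K₂ * C₂ + S))⁻¹ *
        fromRows K₁ K₂ =
      (1 - C₁ * (K₁ * C₁)⁻¹ * K₁) - (1 - C₁ * (K₁ * C₁)⁻¹ * K₁) * C₂ *
        (S + K₂ * C₂ - K₂ * C₁ * (K₁ * C₁)⁻¹ * (K₁ * C₂))⁻¹ * K₂ *
        (1 - C₁ * (K₁ * C₁)⁻¹ * K₁) := by
  have hschur : K₂ * C₂ + S - K₂ * C₁ * (K₁ * C₁)⁻¹ * (K₁ * C₂) =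
      S + K₂ * C₂ - K₂ * C₁ * (K₁ * C₁)⁻¹ * (K₁ * C₂) := by
    rw [add_comm]
  rw [inv_fromBlocks_of_isUnit₁₁ h₁ (hschur ▸ hQ), hschur, fromCols_mul_fromBlocks,
    fromCols_mul_fromRows]
  simp only [Matrix.mul_add, Matrix.add_mul, Matrix.mul_sub, Matrix.sub_mul, Matrix.mul_neg,
    Matrix.neg_mul, Matrix.mul_one, Matrix.one_mul, Matrix.mul_assoc]
  abel

end Matrix

theorem stmt_14_general {N c d : ℕ}
    (C₁ : Matrix (Fin d) (Fin c) ℝ) (C₂ : Matrix (Fin d) (Fin (N - c)) ℝ)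
    (K₁ : Matrix (Fin c) (Fin d) ℝ) (K₂ : Matrix (Fin (N - c)) (Fin d) ℝ)
    (E₂ : Matrix (Fin (N - c)) (Fin (N - c)) ℝ)
    (hK₁C₁ : IsUnit (K₁ * C₁))
    (hQ : IsUnit ((1 : Matrix (Fin (N - c)) (Fin (N - c)) ℝ) - E₂ + K₂ * C₂ -
        K₂ * C₁ * (K₁ * C₁)⁻¹ * (K₁ * C₂)))
    (hE : IsUnit ((1 : Matrix (Fin (N - c)) (Fin (N - c)) ℝ) - E₂))
    (hR : IsUnit ((1 : Matrix (Fin d) (Fin d) ℝ) +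
        ((1 : Matrix (Fin d) (Fin d) ℝ) - C₁ * (K₁ * C₁)⁻¹ * K₁) * C₂ *
          ((1 : Matrix (Fin (N - c)) (Fin (N - c)) ℝ) - E₂)⁻¹ * K₂ *
          ((1 : Matrix (Fin d) (Fin d) ℝ) - C₁ * (K₁ * C₁)⁻¹ * K₁))) :
    ((1 : Matrix (Fin d) (Fin d) ℝ) -
        Matrix.fromCols C₁ C₂ *
          (Matrix.fromBlocks (K₁ * C₁) (K₁ * C₂) (K₂ * C₁) (K₂ * C₂ + 1 - E₂))⁻¹ *
          Matrix.fromRows K₁ K₂)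
      = ((1 : Matrix (Fin d) (Fin d) ℝ) - C₁ * (K₁ * C₁)⁻¹ * K₁) -
        ((1 : Matrix (Fin d) (Fin d) ℝ) - C₁ * (K₁ * C₁)⁻¹ * K₁) * C₂ *
          ((1 : Matrix (Fin (N - c)) (Fin (N - c)) ℝ) - E₂ + K₂ * C₂ -
            K₂ * C₁ * (K₁ * C₁)⁻¹ * (K₁ * C₂))⁻¹ * K₂ *
          ((1 : Matrix (Fin d) (Fin d) ℝ) - C₁ * (K₁ * C₁)⁻¹ * K₁) ∧
    ((1 : Matrix (Fin d) (Fin d) ℝ) -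
        Matrix.fromCols C₁ C₂ *
          (Matrix.fromBlocks (K₁ * C₁) (K₁ * C₂) (K₂ * C₁) (K₂ * C₂ + 1 - E₂))⁻¹ *
          Matrix.fromRows K₁ K₂).rank = d - c := by
  have hk := one_sub_fromCols_mul_inv_fromBlocks_mul_fromRows C₁ C₂ K₁ K₂ (1 - E₂) hK₁C₁ hQ
  rw [← add_sub_assoc] at hk
  refine ⟨hk, ?_⟩
  have hQS : 1 - E₂ + K₂ * C₂ - K₂ * C₁ * (K₁ * C₁)⁻¹ * (K₁ * C₂) - (1 - E₂) =
      K₂ * (1 - C₁ * (K₁ * C₁)⁻¹ * K₁) * C₂ := by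
    simp only [Matrix.mul_sub, Matrix.sub_mul, Matrix.mul_one, Matrix.mul_assoc]
    abel
  rw [hk, rank_sub_mul_inv_mul_of_isIdempotentElem (isIdempotentElem_mul_inv_mul hK₁C₁).one_sub
    C₂ K₂ hE hQ hQS hR, rank_one_sub_mul_inv_mul hK₁C₁, Fintype.card_fin, Fintype.card_fin]

theorem stmt_14 {N c d : ℕ}
    (C₁ : Matrix (Fin d) (Fin c) ℝ) (C₂ : Matrix (Fin d) (Fin (N - c)) ℝ)
    (K₁ : Matrix (Fin c) (Fin d) ℝ) (K₂ : Matrix (Fin (N - c)) (Fin d) ℝ)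
    (E₂ : Matrix (Fin (N - c)) (Fin (N - c)) ℝ)
    (hG : IsUnit (Matrix.fromBlocks (K₁ * C₁) (K₁ * C₂) (K₂ * C₁) (K₂ * C₂ + 1 - E₂)))
    (hK₁C₁ : IsUnit (K₁ * C₁))
    (hQ : IsUnit ((1 : Matrix (Fin (N - c)) (Fin (N - c)) ℝ) - E₂ + K₂ * C₂ -
        K₂ * C₁ * (K₁ * C₁)⁻¹ * (K₁ * C₂)))
    (hE : IsUnit ((1 : Matrix (Fin (N - c)) (Fin (N - c)) ℝ) - E₂))
    (hR : IsUnit ((1 : Matrix (Fin d) (Fin d) ℝ) +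
        ((1 : Matrix (Fin d) (Fin d) ℝ) - C₁ * (K₁ * C₁)⁻¹ * K₁) * C₂ *
          ((1 : Matrix (Fin (N - c)) (Fin (N - c)) ℝ) - E₂)⁻¹ * K₂ *
          ((1 : Matrix (Fin d) (Fin d) ℝ) - C₁ * (K₁ * C₁)⁻¹ * K₁))) :
    ((1 : Matrix (Fin d) (Fin d) ℝ) -
        Matrix.fromCols C₁ C₂ *
          (Matrix.fromBlocks (K₁ * C₁) (K₁ * C₂) (K₂ * C₁) (K₂ * C₂ + 1 - E₂))⁻¹ *
          Matrix.fromRows K₁ K₂)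
      = ((1 : Matrix (Fin d) (Fin d) ℝ) - C₁ * (K₁ * C₁)⁻¹ * K₁) -
        ((1 : Matrix (Fin d) (Fin d) ℝ) - C₁ * (K₁ * C₁)⁻¹ * K₁) * C₂ *
          ((1 : Matrix (Fin (N - c)) (Fin (N - c)) ℝ) - E₂ + K₂ * C₂ -
            K₂ * C₁ * (K₁ * C₁)⁻¹ * (K₁ * C₂))⁻¹ * K₂ *
          ((1 : Matrix (Fin d) (Fin d) ℝ) - C₁ * (K₁ * C₁)⁻¹ * K₁) ∧
    ((1 : Matrix (Fin d) (Fin d) ℝ) -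
        Matrix.fromCols C₁ C₂ *
          (Matrix.fromBlocks (K₁ * C₁) (K₁ * C₂) (K₂ * C₁) (K₂ * C₂ + 1 - E₂))⁻¹ *
          Matrix.fromRows K₁ K₂).rank = d - c :=
  stmt_14_general C₁ C₂ K₁ K₂ E₂ hK₁C₁ hQ hE hR
end
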